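/- arXiv:1605.09172 — 5 statements merged into one kernel-verified Lean document; each statement's English description precedes it below -/
import Mathlib

section
/- Let s > 0 and K ⊆ (F_2)^s be the subgroup of vectors v with Σ v_i = 0. Let φ be a character of K, and let w ∈ (F_2)^s be the unique vector with w_s = 0 whose associated character φ_w restricts to φ on K. For 0 ≤ t ≤ s, the sum over v ∈ K of φ_w(v)·∏_{i=1}^t (x_i + (-1)^{v_i}) equals: 2^{s-1}(∏_{i=1}^s x_i^{w_i} + ∏_{i=1}^s x_i^{w_i+1}) if t = s; 2^{s-1}·∏_{i=1}^t x_i^{w_i+1} if t < s and w_j = 0 for all j > t; and 0 otherwise. -/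
open Finset

private def chi (a : ZMod 2) : ℚ := (-1) ^ a.val

private lemma chi_add (a b : ZMod 2) : chi (a + b) = chi a * chi b := by
  unfold chi
  rw [ZMod.val_add, ← neg_one_pow_eq_pow_mod_two, pow_add]

private lemma chi_sum {ι : Type*} (S : Finset ι) (f : ι → ZMod 2) :
    chi (∑ i ∈ S, f i) = ∏ i ∈ S, chi (f i) := by
  induction S using Finset.cons_induction with
  | empty => simp [chi]
  | cons a s ha ih => rw [Finset.sum_cons, Finset.prod_cons, chi_add, ih]

private lemma sum_zmod2 (f : ZMod 2 → ℚ) : ∑ a : ZMod 2, f a = f 0 + f 1 := by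
  have h : (univ : Finset (ZMod 2)) = {0, 1} := by decide
  rw [h, Finset.sum_insert (by decide), Finset.sum_singleton]

private lemma key (s t : ℕ) (u : Fin s → ZMod 2) (x : Fin s → ℚ) :
    ∑ v : Fin s → ZMod 2, chi (∑ i, v i * u i) *
        ∏ i ∈ univ.filter (fun i : Fin s => (i : ℕ) < t), (x i + chi (v i)) =
    ∏ i : Fin s, ((if (i:ℕ) < t then x i + 1 else 1) +
      chi (u i) * (if (i:ℕ) < t then x i - 1 else 1)) := by
  have h1 : ∀ v : Fin s → ZMod 2, chi (∑ i, v i * u i) *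
      ∏ i ∈ univ.filter (fun i : Fin s => (i : ℕ) < t), (x i + chi (v i)) =
      ∏ i : Fin s, (chi (v i * u i) * (if (i:ℕ) < t then x i + chi (v i) else 1)) := by
    intro v
    rw [chi_sum, Finset.prod_filter, ← Finset.prod_mul_distrib]
  rw [Finset.sum_congr rfl fun v _ => h1 v,
    ← Fintype.prod_sum (fun (i : Fin s) (a : ZMod 2) =>
       chi (a * u i) * (if (i:ℕ) < t then x i + chi a else 1))]
  refine Finset.prod_congr rfl fun i _ => ?_
  rw [sum_zmod2]
  have c0 : chi 0 = 1 := rfl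
  have c1 : chi 1 = -1 := rfl
  simp only [zero_mul, one_mul, c0, c1]
  by_cases h : (i:ℕ) < t
  · simp only [if_pos h]; ring
  · simp only [if_neg h, mul_one]

private lemma card_lt (s t : ℕ) (ht : t ≤ s) :
    (univ.filter (fun i : Fin s => (i:ℕ) < t)).card = t := by
  have he : (univ.filter (fun i : Fin s => (i:ℕ) < t)) =
      Finset.map ⟨Fin.castLE ht, Fin.castLE_injective ht⟩ univ := by
    ext i
    simp only [mem_filter, mem_univ, true_and, Finset.mem_map, Function.Embedding.coeFn_mk]
    constructor
    · intro h; exact ⟨⟨i, h⟩, rfl⟩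
    · rintro ⟨j, rfl⟩; exact j.isLt
  rw [he, Finset.card_map, Finset.card_univ, Fintype.card_fin]

private lemma zmod2cases : ∀ a : ZMod 2, a = 0 ∨ a = 1 := by decide

private lemma factor_lt (a : ZMod 2) (y : ℚ) :
    (y + 1) + chi a * (y - 1) = 2 * y ^ (a + 1).val := by
  rcases zmod2cases a with h | h <;> subst h
  · rw [show (((0:ZMod 2) + 1)).val = 1 by rfl, show chi 0 = 1 from rfl]; ring
  · rw [show (((1:ZMod 2) + 1)).val = 0 by rfl, show chi 1 = -1 from rfl]; ring

theorem stmt_1 (s t : ℕ) (hs : 0 < s) (ht : t ≤ s) (w : Fin s → ZMod 2)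
    (hws : w ⟨s - 1, Nat.sub_lt hs Nat.one_pos⟩ = 0) (x : Fin s → ℚ) :
    ∑ v ∈ Finset.univ.filter (fun v : Fin s → ZMod 2 => (∑ i, v i) = 0),
      (-1 : ℚ) ^ (∑ i, v i * w i).val *
        ∏ i ∈ Finset.univ.filter (fun i : Fin s => (i : ℕ) < t), (x i + (-1 : ℚ) ^ (v i).val) =
    if t = s then
      2 ^ (s - 1) * ((∏ i : Fin s, x i ^ (w i).val) + ∏ i : Fin s, x i ^ (w i + 1).val)
    else if ∀ j : Fin s, t ≤ (j : ℕ) → w j = 0 then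
      2 ^ (s - 1) * ∏ i ∈ Finset.univ.filter (fun i : Fin s => (i : ℕ) < t), x i ^ (w i + 1).val
    else 0 := by
  have hchi : ∀ a : ZMod 2, (-1:ℚ) ^ a.val = chi a := fun _ => rfl
  simp only [hchi]
  have h2s : (2:ℚ) ^ s = 2 * 2 ^ (s - 1) := by
    conv_lhs => rw [show s = (s-1)+1 from (Nat.succ_pred_eq_of_pos hs).symm]
    rw [pow_succ]; ring
  have step1 : ∑ v ∈ univ.filter (fun v : Fin s → ZMod 2 => (∑ i, v i) = 0),
        chi (∑ i, v i * w i) *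
          ∏ i ∈ univ.filter (fun i : Fin s => (i : ℕ) < t), (x i + chi (v i))
      = (1/2) * ∑ v : Fin s → ZMod 2, (1 + chi (∑ i, v i)) *
          (chi (∑ i, v i * w i) *
            ∏ i ∈ univ.filter (fun i : Fin s => (i : ℕ) < t), (x i + chi (v i))) := by
    rw [← Finset.sum_filter_add_sum_filter_not univ
      (fun v : Fin s → ZMod 2 => (∑ i, v i) = 0)
      (fun v => (1 + chi (∑ i, v i)) * (chi (∑ i, v i * w i) *
        ∏ i ∈ univ.filter (fun i : Fin s => (i : ℕ) < t), (x i + chi (v i))))]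
    have h0 : ∀ v ∈ univ.filter (fun v : Fin s → ZMod 2 => (∑ i, v i) = 0),
        (1 + chi (∑ i, v i)) * (chi (∑ i, v i * w i) *
          ∏ i ∈ univ.filter (fun i : Fin s => (i : ℕ) < t), (x i + chi (v i)))
        = 2 * (chi (∑ i, v i * w i) *
          ∏ i ∈ univ.filter (fun i : Fin s => (i : ℕ) < t), (x i + chi (v i))) := by
      intro v hv
      rw [(Finset.mem_filter.mp hv).2, show chi 0 = 1 from rfl]
      ring
    have h1 : ∑ v ∈ univ.filter (fun v : Fin s → ZMod 2 => ¬ (∑ i, v i) = 0),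
        (1 + chi (∑ i, v i)) * (chi (∑ i, v i * w i) *
          ∏ i ∈ univ.filter (fun i : Fin s => (i : ℕ) < t), (x i + chi (v i))) = 0 := by
      refine Finset.sum_eq_zero fun v hv => ?_
      have hne := (Finset.mem_filter.mp hv).2
      rw [(zmod2cases _).resolve_left hne, show chi 1 = -1 from rfl]
      ring
    rw [Finset.sum_congr rfl h0, h1, add_zero, ← Finset.mul_sum]
    ring
  have step2 : ∑ v : Fin s → ZMod 2, (1 + chi (∑ i, v i)) *
        (chi (∑ i, v i * w i) *
          ∏ i ∈ univ.filter (fun i : Fin s => (i : ℕ) < t), (x i + chi (v i)))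
      = (∑ v : Fin s → ZMod 2, chi (∑ i, v i * w i) *
          ∏ i ∈ univ.filter (fun i : Fin s => (i : ℕ) < t), (x i + chi (v i)))
        + ∑ v : Fin s → ZMod 2, chi (∑ i, v i * (w i + 1)) *
          ∏ i ∈ univ.filter (fun i : Fin s => (i : ℕ) < t), (x i + chi (v i)) := by
    rw [← Finset.sum_add_distrib]
    refine Finset.sum_congr rfl fun v _ => ?_
    have hsum : (∑ i, v i * (w i + 1)) = (∑ i, v i * w i) + ∑ i, v i := by
      rw [← Finset.sum_add_distrib]
      exact Finset.sum_congr rfl fun i _ => by ring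
    rw [hsum, chi_add]
    ring
  rw [step1, step2, key s t w x, key s t (fun i => w i + 1) x]
  by_cases hts : t = s
  · rw [if_pos hts]
    have hlt : ∀ i : Fin s, (i:ℕ) < t := fun i => by have := i.isLt; omega
    have hA : (∏ i : Fin s, ((if (i:ℕ) < t then x i + 1 else 1) +
        chi (w i) * (if (i:ℕ) < t then x i - 1 else 1)))
        = 2 ^ s * ∏ i : Fin s, x i ^ (w i + 1).val := by
      have hfac : ∀ i ∈ (univ : Finset (Fin s)),
          ((if (i:ℕ) < t then x i + 1 else 1) +
            chi (w i) * (if (i:ℕ) < t then x i - 1 else 1))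
          = 2 * x i ^ (w i + 1).val := fun i _ => by
        rw [if_pos (hlt i), if_pos (hlt i)]; exact factor_lt (w i) (x i)
      rw [Finset.prod_congr rfl hfac, Finset.prod_mul_distrib, Finset.prod_const,
        Finset.card_univ, Fintype.card_fin]
    have hB : (∏ i : Fin s, ((if (i:ℕ) < t then x i + 1 else 1) +
        chi (w i + 1) * (if (i:ℕ) < t then x i - 1 else 1)))
        = 2 ^ s * ∏ i : Fin s, x i ^ (w i).val := by
      have hw11 : ∀ a : ZMod 2, a + 1 + 1 = a := by decide
      have hfac : ∀ i ∈ (univ : Finset (Fin s)),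
          ((if (i:ℕ) < t then x i + 1 else 1) +
            chi (w i + 1) * (if (i:ℕ) < t then x i - 1 else 1))
          = 2 * x i ^ (w i).val := fun i _ => by
        rw [if_pos (hlt i), if_pos (hlt i), factor_lt (w i + 1) (x i), hw11]
      rw [Finset.prod_congr rfl hfac, Finset.prod_mul_distrib, Finset.prod_const,
        Finset.card_univ, Fintype.card_fin]
    rw [hA, hB, h2s]
    ring
  · rw [if_neg hts]
    have htlt : t < s := lt_of_le_of_ne ht hts
    have hnl : ¬ ((⟨s - 1, Nat.sub_lt hs Nat.one_pos⟩ : Fin s) : ℕ) < t := by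
      simp only [not_lt]; omega
    have hB0 : (∏ i : Fin s, ((if (i:ℕ) < t then x i + 1 else 1) +
        chi (w i + 1) * (if (i:ℕ) < t then x i - 1 else 1))) = 0 := by
      apply Finset.prod_eq_zero (Finset.mem_univ (⟨s - 1, Nat.sub_lt hs Nat.one_pos⟩ : Fin s))
      rw [if_neg hnl, if_neg hnl, hws, show chi (0 + 1) = -1 from rfl]
      ring
    by_cases hall : ∀ j : Fin s, t ≤ (j : ℕ) → w j = 0
    · rw [if_pos hall]
      have e1 : (∏ i ∈ univ.filter (fun i : Fin s => (i:ℕ) < t),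
          ((if (i:ℕ) < t then x i + 1 else 1) +
            chi (w i) * (if (i:ℕ) < t then x i - 1 else 1)))
          = 2 ^ t * ∏ i ∈ univ.filter (fun i : Fin s => (i : ℕ) < t), x i ^ (w i + 1).val := by
        have hfac : ∀ i ∈ univ.filter (fun i : Fin s => (i:ℕ) < t),
            ((if (i:ℕ) < t then x i + 1 else 1) +
              chi (w i) * (if (i:ℕ) < t then x i - 1 else 1))
            = 2 * x i ^ (w i + 1).val := fun i hi => by
          have hlt := (Finset.mem_filter.mp hi).2
          rw [if_pos hlt, if_pos hlt]; exact factor_lt (w i) (x i)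
        rw [Finset.prod_congr rfl hfac, Finset.prod_mul_distrib, Finset.prod_const,
          card_lt s t ht]
      have e2 : (∏ i ∈ univ.filter (fun i : Fin s => ¬ (i:ℕ) < t),
          ((if (i:ℕ) < t then x i + 1 else 1) +
            chi (w i) * (if (i:ℕ) < t then x i - 1 else 1))) = 2 ^ (s - t) := by
        have hfac : ∀ i ∈ univ.filter (fun i : Fin s => ¬ (i:ℕ) < t),
            ((if (i:ℕ) < t then x i + 1 else 1) +
              chi (w i) * (if (i:ℕ) < t then x i - 1 else 1)) = (2:ℚ) := fun i hi => by
          have hge := (Finset.mem_filter.mp hi).2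
          rw [if_neg hge, if_neg hge, hall i (not_lt.mp hge), show chi 0 = 1 from rfl]
          ring
        rw [Finset.prod_congr rfl hfac, Finset.prod_const]
        congr 1
        have hcards := Finset.card_filter_add_card_filter_not
          (s := (univ : Finset (Fin s))) (p := fun i : Fin s => (i:ℕ) < t)
        rw [card_lt s t ht, Finset.card_univ, Fintype.card_fin] at hcards
        omega
      rw [← Finset.prod_filter_mul_prod_filter_not univ (fun i : Fin s => (i:ℕ) < t)
        (fun i => (if (i:ℕ) < t then x i + 1 else 1) +
          chi (w i) * (if (i:ℕ) < t then x i - 1 else 1)), e1, e2, hB0]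
      have hpow : (2:ℚ) ^ t * 2 ^ (s - t) = 2 * 2 ^ (s - 1) := by
        rw [← pow_add, show t + (s - t) = s from by omega, h2s]
      linear_combination (∏ i ∈ univ.filter (fun i : Fin s => (i : ℕ) < t),
        x i ^ (w i + 1).val) / 2 * hpow
    · rw [if_neg hall]
      push_neg at hall
      obtain ⟨j, hj, hwj⟩ := hall
      have hA0 : (∏ i : Fin s, ((if (i:ℕ) < t then x i + 1 else 1) +
          chi (w i) * (if (i:ℕ) < t then x i - 1 else 1))) = 0 := by
        apply Finset.prod_eq_zero (Finset.mem_univ j)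
        have hnj : ¬ (j:ℕ) < t := not_lt.mpr hj
        rw [if_neg hnj, if_neg hnj, (zmod2cases (w j)).resolve_left hwj,
          show chi 1 = -1 from rfl]
        ring
      rw [hA0, hB0]
      norm_num
end

section
/- Let n, k be nonnegative integers with k ≤ n, written uniquely as n = d·n̂ + n̂̂ and k = d·k̂ + k̂̂ with 0 ≤ n̂̂, k̂̂ < d, and let ω be a primitive d-th root of unity. Then the evaluation of the Gaussian binomial coefficient [n choose k]_q at q = ω equals binom(n̂, k̂) times the evaluation of [n̂̂ choose k̂̂]_q at q = ω (interpreted as 0 if k̂̂ > n̂̂). -/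
open Finset Polynomial

/-- The Gaussian binomial coefficient `[n choose k]_q` as a polynomial in `q`,
defined by the q-Pascal recursion `[n+1, k+1] = [n, k] + q^(k+1) [n, k+1]`. -/
noncomputable def qbinom : ℕ → ℕ → Polynomial ℤ
  | _, 0 => 1
  | 0, _ + 1 => 0
  | n + 1, k + 1 => qbinom n k + Polynomial.X ^ (k + 1) * qbinom n (k + 1)

lemma qbinom_succ_succ (n k : ℕ) :
    qbinom (n+1) (k+1) = qbinom n k + X ^ (k + 1) * qbinom n (k + 1) := rfl

lemma qbinom_zero_right (n : ℕ) : qbinom n 0 = 1 := by cases n <;> rfl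

lemma qbinom_eq_zero : ∀ n k : ℕ, n < k → qbinom n k = 0
  | 0, _+1, _ => rfl
  | n+1, k+1, h => by
      rw [qbinom_succ_succ, qbinom_eq_zero n k (by omega),
        qbinom_eq_zero n (k+1) (by omega)]
      ring

lemma qbinom_diag : ∀ n : ℕ, qbinom n n = 1
  | 0 => rfl
  | n+1 => by
      rw [qbinom_succ_succ, qbinom_diag n, qbinom_eq_zero n (n+1) (by omega)]
      ring

lemma qbinom_key : ∀ n k : ℕ,
    (X ^ (k+1) - 1) * qbinom (n+1) (k+1) = (X ^ (n+1) - 1) * qbinom n k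
  | 0, 0 => by simp [qbinom_succ_succ, qbinom_zero_right, qbinom_eq_zero 0 1 (by omega)]
  | 0, k+1 => by
      rw [qbinom_eq_zero 1 (k+2) (by omega), qbinom_eq_zero 0 (k+1) (by omega)]
      ring
  | n+1, 0 => by
      have h := qbinom_key n 0
      rw [qbinom_zero_right] at h
      rw [qbinom_succ_succ, qbinom_zero_right]
      linear_combination X * h
  | n+1, k+1 => by
      have h1 := qbinom_key n (k+1)
      have h2 := qbinom_key n k
      have e1 : qbinom (n+2) (k+2) = qbinom (n+1) (k+1) + X^(k+2) * qbinom (n+1) (k+2) := rfl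
      have e2 : qbinom (n+1) (k+1) = qbinom n k + X^(k+1) * qbinom n (k+1) := rfl
      rw [e1, e2]
      rw [e2] at h2
      linear_combination X^(k+2) * h1 + X * h2

lemma aeval_qbinom_d {d : ℕ} {ω : ℂ} (hω : IsPrimitiveRoot ω d) {j : ℕ}
    (h0 : 0 < j) (hj : j < d) : Polynomial.aeval ω (qbinom d j) = 0 := by
  obtain ⟨j, rfl⟩ : ∃ j', j = j'+1 := ⟨j-1, by omega⟩
  obtain ⟨m, rfl⟩ : ∃ m, d = m+1 := ⟨d-1, by omega⟩
  have h := congrArg (Polynomial.aeval ω) (qbinom_key m j)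
  simp only [map_mul, map_sub, map_pow, map_one, aeval_X] at h
  rw [hω.pow_eq_one, sub_self, zero_mul] at h
  have hne : ω ^ (j+1) ≠ 1 := by
    intro hc
    have hdvd := (hω.pow_eq_one_iff_dvd (j+1)).1 hc
    have := Nat.le_of_dvd (by omega) hdvd
    omega
  exact (mul_eq_zero.mp h).resolve_left (sub_ne_zero.mpr hne)

lemma pow_mod_d {d : ℕ} {ω : ℂ} (hω : IsPrimitiveRoot ω d) (m : ℕ) :
    ω ^ m = ω ^ (m % d) := by
  conv_lhs => rw [← Nat.div_add_mod m d]
  rw [pow_add, pow_mul, hω.pow_eq_one, one_pow, one_mul]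

lemma qlucas_aux (d : ℕ) (hd : 0 < d) (ω : ℂ) (hω : IsPrimitiveRoot ω d) :
    ∀ n k : ℕ, Polynomial.aeval ω (qbinom n k) =
      (Nat.choose (n / d) (k / d) : ℂ) * Polynomial.aeval ω (qbinom (n % d) (k % d)) := by
  intro n
  induction n with
  | zero =>
    intro k
    rcases k with _ | j
    · simp [qbinom_zero_right]
    · rw [qbinom_eq_zero 0 (j+1) (by omega), map_zero]
      simp only [Nat.zero_div, Nat.zero_mod]
      obtain ⟨b, hb, hb2⟩ : ∃ b, (j+1)/d = b ∧ d*b + (j+1)%d = j+1 :=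
        ⟨_, rfl, by have := Nat.div_add_mod (j+1) d; omega⟩
      rw [hb]
      rcases Nat.eq_zero_or_pos ((j+1)%d) with h | h
      · rcases Nat.eq_zero_or_pos b with rfl | hb1
        · omega
        · rw [Nat.choose_eq_zero_of_lt hb1]
          simp
      · rw [qbinom_eq_zero 0 ((j+1)%d) h, map_zero, mul_zero]
  | succ n ih =>
    intro k
    rcases k with _ | j
    · simp [qbinom_zero_right]
    · rw [qbinom_succ_succ, map_add, map_mul, map_pow, aeval_X, ih j, ih (j+1),
        pow_mod_d hω (j+1)]
      obtain ⟨a, ha, ha2⟩ : ∃ a, n/d = a ∧ d*a + n%d = n :=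
        ⟨_, rfl, by have := Nat.div_add_mod n d; omega⟩
      obtain ⟨b, hb, hb2⟩ : ∃ b, (j+1)/d = b ∧ d*b + (j+1)%d = j+1 :=
        ⟨_, rfl, by have := Nat.div_add_mod (j+1) d; omega⟩
      have hda : d*(a+1) = d*a + d := by ring
      have hrlt : n % d < d := Nat.mod_lt _ hd
      have hslt : (j+1) % d < d := Nat.mod_lt _ hd
      rcases Nat.eq_zero_or_pos ((j+1) % d) with hs | hs
      · -- (j+1) % d = 0, so j % d = d - 1, j / d = b - 1, (j+1)/d = b
        have hbpos : 0 < b := by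
          rcases Nat.eq_zero_or_pos b with rfl | h
          · omega
          · exact h
        obtain ⟨b, rfl⟩ : ∃ b', b = b'+1 := ⟨b-1, by omega⟩
        have hdb : d*(b+1) = d*b + d := by ring
        have hj : j / d = b ∧ j % d = d - 1 :=
          (Nat.div_mod_unique hd).2 ⟨by omega, by omega⟩
        rcases Nat.lt_or_ge (n % d + 1) d with hr | hr
        · -- (n+1)%d = n%d+1, (n+1)/d = a
          have hn1 : (n+1) / d = a ∧ (n+1) % d = n % d + 1 :=
            (Nat.div_mod_unique hd).2 ⟨by omega, by omega⟩
          rw [hj.1, hj.2, hs, hb, hn1.1, hn1.2, ha]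
          rw [qbinom_eq_zero (n % d) (d-1) (by omega), qbinom_zero_right,
            qbinom_zero_right]
          simp
        · -- n % d = d - 1, (n+1)%d = 0, (n+1)/d = a+1
          have hn1 : (n+1) / d = a + 1 ∧ (n+1) % d = 0 :=
            (Nat.div_mod_unique hd).2 ⟨by omega, by omega⟩
          have hnd : n % d = d - 1 := by omega
          rw [hj.1, hj.2, hs, hb, hn1.1, hn1.2, ha, hnd]
          rw [show qbinom (d-1) (d-1) = 1 from qbinom_diag _, qbinom_zero_right,
            qbinom_zero_right]
          simp only [map_one, mul_one, pow_zero, one_mul]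
          rw [Nat.choose_succ_succ (a) (b)]
          push_cast
          ring
      · -- (j+1) % d = s+1 ≥ 1, so j % d = s, j / d = b
        obtain ⟨t, ht⟩ : ∃ t, (j+1) % d = t + 1 := ⟨(j+1)%d - 1, by omega⟩
        have hj : j / d = b ∧ j % d = t :=
          (Nat.div_mod_unique hd).2 ⟨by omega, by omega⟩
        rcases Nat.lt_or_ge (n % d + 1) d with hr | hr
        · have hn1 : (n+1) / d = a ∧ (n+1) % d = n % d + 1 :=
            (Nat.div_mod_unique hd).2 ⟨by omega, by omega⟩
          obtain ⟨r, hrr⟩ : ∃ r, n % d = r := ⟨_, rfl⟩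
          rw [hj.1, hj.2, ht, hb, hn1.1, hn1.2, ha, hrr]
          rw [qbinom_succ_succ r t, map_add, map_mul, map_pow, aeval_X]
          ring
        · have hn1 : (n+1) / d = a + 1 ∧ (n+1) % d = 0 :=
            (Nat.div_mod_unique hd).2 ⟨by omega, by omega⟩
          have hnd : n % d = d - 1 := by omega
          obtain ⟨m, hm⟩ : ∃ m, d = m + 1 := ⟨d-1, by omega⟩
          rw [hj.1, hj.2, ht, hb, hn1.1, hn1.2, ha, hnd]
          rw [qbinom_eq_zero 0 (t+1) (by omega), map_zero, mul_zero]
          have key : Polynomial.aeval ω (qbinom ((d-1)+1) (t+1)) = 0 := by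
            rw [show (d-1)+1 = d by omega]
            exact aeval_qbinom_d hω (by omega) (by omega)
          rw [qbinom_succ_succ (d-1) t, map_add, map_mul, map_pow, aeval_X] at key
          linear_combination (Nat.choose a b : ℂ) * key

/-- q-Lucas theorem: evaluation of the Gaussian binomial at a primitive d-th root of unity. -/
theorem stmt_6 (d n k : ℕ) (hd : 0 < d) (hk : k ≤ n) (ω : ℂ) (hω : IsPrimitiveRoot ω d) :
    Polynomial.aeval ω (qbinom n k) =
      (Nat.choose (n / d) (k / d) : ℂ) * Polynomial.aeval ω (qbinom (n % d) (k % d)) := by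
  exact qlucas_aux d hd ω hω n k
end

section
/- Let λ be a partition of n, d ≥ 2 a positive integer, and suppose there exists j_0 such that μ_{j_0}(λ) ≡ 1 (mod d) and μ_j(λ) ≡ 0 (mod d) for all j ≠ j_0. Then c(λ) = Σ_j λ′_j λ′_{j+1} satisfies c(λ) ≡ j_0 − 1 (mod d). If instead μ_j(λ) ≡ 0 (mod d) for all j, then c(λ) ≡ 0 (mod d). -/
open Finset

lemma conj_eq_sum (n : ℕ) (P : Nat.Partition n) (j : ℕ) (hj : 1 ≤ j) :
    Multiset.card (P.parts.filter (fun p => j ≤ p)) =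
      ∑ i ∈ Finset.Icc j n, Multiset.count i P.parts := by
  have hmem : ∀ p ∈ P.parts, 1 ≤ p ∧ p ≤ n := by
    intro p hp
    exact ⟨P.parts_pos hp, P.parts_sum ▸ Multiset.le_sum_of_mem hp⟩
  have h1 : Multiset.card (P.parts.filter (fun p => j ≤ p)) =
      ∑ i ∈ P.parts.toFinset, if j ≤ i then Multiset.count i P.parts else 0 := by
    rw [← Multiset.toFinset_sum_count_eq (P.parts.filter (fun p => j ≤ p))]
    rw [Finset.sum_subset (Multiset.toFinset_subset.mpr (Multiset.filter_subset _ _))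
      (fun x _ hx => by rw [Multiset.count_eq_zero]; simpa using hx)]
    exact Finset.sum_congr rfl fun i _ => by rw [Multiset.count_filter]
  have h2 : ∑ i ∈ P.parts.toFinset, (if j ≤ i then Multiset.count i P.parts else 0) =
      ∑ i ∈ Finset.Icc 1 n, if j ≤ i then Multiset.count i P.parts else 0 := by
    refine Finset.sum_subset (fun x hx => ?_) (fun x _ hx => ?_)
    · simp only [Multiset.mem_toFinset] at hx
      exact Finset.mem_Icc.mpr (hmem x hx)
    · simp only [Multiset.mem_toFinset] at hx
      simp [Multiset.count_eq_zero.mpr hx]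
  have h3 : ∑ i ∈ Finset.Icc j n, Multiset.count i P.parts =
      ∑ i ∈ Finset.Icc j n, if j ≤ i then Multiset.count i P.parts else 0 :=
    Finset.sum_congr rfl fun i hi => by rw [if_pos (Finset.mem_Icc.mp hi).1]
  have h4 : (∑ i ∈ Finset.Icc j n, if j ≤ i then Multiset.count i P.parts else 0) =
      ∑ i ∈ Finset.Icc 1 n, if j ≤ i then Multiset.count i P.parts else 0 := by
    refine Finset.sum_subset (fun x hx => ?_) (fun x hx hx' => ?_)
    · simp only [Finset.mem_Icc] at hx ⊢; omega
    · simp only [Finset.mem_Icc] at hx hx'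
      rw [if_neg (by omega)]
  rw [h1, h2, h3, h4]

/-- Congruences modulo `d` for `c(λ) = Σ_j λ′_j λ′_{j+1}` of a partition `λ` of `n`:
if exactly one multiplicity `μ_{j_0}(λ) ≡ 1 (mod d)` and all others are `≡ 0`, then
`c(λ) ≡ j_0 − 1 (mod d)`; if all multiplicities are `≡ 0 (mod d)` then `c(λ) ≡ 0`. -/
theorem stmt_16 (n d : ℕ) (hd : 2 ≤ d) (P : Nat.Partition n) :
    (fun (μ : ℕ → ℕ) (conj : ℕ → ℕ) =>
      (fun c : ℕ =>
        (∀ j₀ : ℕ, μ j₀ ≡ 1 [MOD d] → (∀ j, j ≠ j₀ → μ j ≡ 0 [MOD d]) →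
          c ≡ j₀ - 1 [MOD d]) ∧
        ((∀ j, μ j ≡ 0 [MOD d]) → c ≡ 0 [MOD d]))
      (∑ j ∈ Finset.Icc 1 n, conj j * conj (j + 1)))
      (fun j => Multiset.count j P.parts)
      (fun j => Multiset.card (P.parts.filter (fun p => j ≤ p))) := by
  simp only
  have key : ∀ a b : ℕ, (a : ZMod d) = (b : ZMod d) → a ≡ b [MOD d] :=
    fun a b h => (ZMod.natCast_eq_natCast_iff a b d).mp h
  constructor
  · intro j₀ h1 h0
    have hμpos : Multiset.count j₀ P.parts ≠ 0 := by
      intro h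
      rw [h] at h1
      have : (0 : ℕ) % d = 1 % d := h1
      rw [Nat.zero_mod, Nat.mod_eq_of_lt (by omega)] at this
      omega
    have hj₀mem : j₀ ∈ P.parts := Multiset.count_ne_zero.mp hμpos
    have hj₀pos : 1 ≤ j₀ := P.parts_pos hj₀mem
    have hj₀n : j₀ ≤ n := P.parts_sum ▸ Multiset.le_sum_of_mem hj₀mem
    apply key
    push_cast
    have hconj : ∀ j, 1 ≤ j →
        ((Multiset.card (P.parts.filter (fun p => j ≤ p)) : ZMod d)) =
          if j ≤ j₀ then 1 else 0 := by
      intro j hj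
      rw [conj_eq_sum n P j hj]
      push_cast
      by_cases h : j ≤ j₀
      · rw [Finset.sum_eq_single j₀]
        · rw [if_pos h]
          have := (ZMod.natCast_eq_natCast_iff _ _ d).mpr h1
          simpa using this
        · intro b _ hb
          have := (ZMod.natCast_eq_natCast_iff _ _ d).mpr (h0 b hb)
          simpa using this
        · intro hb
          exact absurd (Finset.mem_Icc.mpr ⟨h, hj₀n⟩) hb
      · rw [if_neg h]
        apply Finset.sum_eq_zero
        intro i hi
        simp only [Finset.mem_Icc] at hi
        have := (ZMod.natCast_eq_natCast_iff _ _ d).mpr (h0 i (by omega))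
        simpa using this
    have hstep : (∑ j ∈ Finset.Icc 1 n,
        ((Multiset.card (P.parts.filter (fun p => j ≤ p)) : ZMod d) *
         (Multiset.card (P.parts.filter (fun p => j + 1 ≤ p)) : ZMod d))) =
        ∑ j ∈ Finset.Icc 1 n, if j + 1 ≤ j₀ then (1 : ZMod d) else 0 := by
      refine Finset.sum_congr rfl fun j hj => ?_
      simp only [Finset.mem_Icc] at hj
      rw [hconj j hj.1, hconj (j+1) (by omega)]
      by_cases h : j + 1 ≤ j₀
      · simp [h, show j ≤ j₀ by omega]
      · simp [h]
    rw [hstep, Finset.sum_boole]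
    have hfilter : (Finset.Icc 1 n).filter (fun j => j + 1 ≤ j₀) = Finset.Icc 1 (j₀ - 1) := by
      ext x
      simp only [Finset.mem_filter, Finset.mem_Icc]
      omega
    rw [hfilter]
    simp [Nat.card_Icc]
  · intro h0
    apply key
    push_cast
    apply Finset.sum_eq_zero
    intro j hj
    simp only [Finset.mem_Icc] at hj
    rw [conj_eq_sum n P j hj.1]
    push_cast
    rw [Finset.sum_eq_zero fun i _ => by
      have := (ZMod.natCast_eq_natCast_iff _ _ d).mpr (h0 i)
      simpa using this]
    rw [zero_mul]
end

section
/- Let λ be a partition with all μ_j(λ) even, and let d ≥ 1 with d⁺ = lcm(2,d). If μ_j(λ) ≡ 0 (mod d⁺) for all j, then |λ| ≡ 0 (mod d⁺) and, writing ω_d for a primitive d-th root of unity, ω_d^{μ_1(λ) − τ_1(λ)} = (−1)^{|λ|/d}, where τ_1(λ) = (1/2)·Σ_{j odd} μ_j(λ). -/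
open Finset

/-!
Writing `μ_j` for the multiplicities, `|λ| - 2τ₁ = Σ_j (j - [j odd]) μ_j`, and every term is a
multiple of `2 d⁺` because `j - [j odd]` is even and `d⁺ ∣ μ_j`. Hence `|λ|/d ≡ 2τ₁/d (mod 2)`.
Since `d ∣ μ₁`, the left side is `ω^{-τ₁}`, and `ω^{τ₁} = (-1)^{2τ₁/d}` because `d⁺ ∣ 2τ₁`:
for even `d` this is `ω^{d/2} = -1`, for odd `d` both sides are `1`.
-/

theorem Nat.Partition.sum_Icc_count_mul {n : ℕ} (P : n.Partition) :
    ∑ j ∈ Icc 1 n, P.parts.count j * j = n := by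
  simpa [Nat.Partition.toFinsuppAntidiag] using
    (mem_finsuppAntidiag.mp P.toFinsuppAntidiag_mem_finsuppAntidiag).1

theorem Finset.sum_mul_modEq_sum_filter_odd (s : Finset ℕ) (c : ℕ → ℕ) {m : ℕ}
    (h : ∀ j ∈ s, m ∣ c j) :
    ∑ j ∈ s, c j * j ≡ ∑ j ∈ s with Odd j, c j [MOD 2 * m] := by
  rw [sum_filter]
  refine Nat.ModEq.sum fun j hj => ?_
  have hodd : (if Odd j then c j else 0) = c j * (j % 2) := by
    rcases Nat.even_or_odd j with hj | hj
    · simp [Nat.not_odd_iff_even.mpr hj, Nat.even_iff.mp hj]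
    · simp [hj, Nat.odd_iff.mp hj]
  rw [hodd]
  exact ((Nat.mod_modEq j 2).symm.mul_left' (c j)).of_dvd
    (by rw [mul_comm 2]; exact mul_dvd_mul_right (h j hj) 2)

theorem IsPrimitiveRoot.pow_div_two_eq_neg_one_pow {R : Type*} [CommRing R] [NoZeroDivisors R]
    {ω : R} {d m : ℕ} (hω : IsPrimitiveRoot ω d) (hm : Nat.lcm 2 d ∣ m) :
    ω ^ (m / 2) = (-1) ^ (m / d) := by
  obtain rfl | hd := eq_or_ne d 0
  · simp_all
  rcases Nat.even_or_odd' d with ⟨e, rfl | rfl⟩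
  · have he : e ≠ 0 := by rintro rfl; simp at hd
    obtain ⟨k, rfl⟩ : 2 * e ∣ m := by
      rwa [Nat.lcm_eq_right (dvd_mul_right 2 e)] at hm
    have hωe : ω ^ e = -1 :=
      (by simpa [he] using hω.pow_of_dvd he (dvd_mul_left e 2) : IsPrimitiveRoot (ω ^ e) 2)
        |>.eq_neg_one_of_two_right
    rw [Nat.mul_div_cancel_left _ hd.bot_lt, mul_assoc, Nat.mul_div_cancel_left _ two_pos,
      pow_mul, hωe]
  · obtain ⟨k, rfl⟩ : 2 * (2 * e + 1) ∣ m := by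
      rwa [(Nat.coprime_two_left.mpr (odd_two_mul_add_one e)).lcm_eq_mul] at hm
    rw [mul_assoc, Nat.mul_div_cancel_left _ two_pos, mul_left_comm,
      Nat.mul_div_cancel_left _ hd.bot_lt, pow_mul, hω.pow_eq_one, one_pow, pow_mul, neg_one_sq,
      one_pow]

theorem neg_one_pow_div_eq_of_modEq {R : Type*} [Monoid R] [HasDistribNeg R] {a b d : ℕ}
    (ha : d ∣ a) (hb : d ∣ b) (h : a ≡ b [MOD 2 * d]) :
    (-1 : R) ^ (a / d) = (-1) ^ (b / d) := by
  obtain rfl | hd := eq_or_ne d 0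
  · simp
  obtain ⟨x, rfl⟩ := ha
  obtain ⟨y, rfl⟩ := hb
  have hxy : x ≡ y [MOD 2] :=
    Nat.ModEq.mul_left_cancel' hd (by rwa [mul_comm 2 d] at h)
  rw [Nat.mul_div_cancel_left _ hd.bot_lt, Nat.mul_div_cancel_left _ hd.bot_lt]
  exact neg_one_pow_congr (by rw [Nat.even_iff, Nat.even_iff, hxy])

theorem stmt_17_general (n d : ℕ) (hd : 0 < d) (P : Nat.Partition n)
    (hmod : ∀ j, Nat.lcm 2 d ∣ Multiset.count j P.parts)
    (ω : ℂ) (hω : IsPrimitiveRoot ω d) :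
    Nat.lcm 2 d ∣ n ∧
      ω ^ (((Multiset.count 1 P.parts : ℕ) : ℤ) -
            (((∑ j ∈ (Finset.Icc 1 n).filter (fun j => Odd j),
                Multiset.count j P.parts) / 2 : ℕ) : ℤ)) =
        (-1 : ℂ) ^ (n / d) := by
  set S := ∑ j ∈ (Icc 1 n).filter (fun j => Odd j), P.parts.count j
  have hdL : d ∣ Nat.lcm 2 d := Nat.dvd_lcm_right 2 d
  have hn : Nat.lcm 2 d ∣ n := P.sum_Icc_count_mul ▸ dvd_sum fun j _ => (hmod j).mul_right j
  have hS : Nat.lcm 2 d ∣ S := dvd_sum fun j _ => hmod j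
  have hnS : n ≡ S [MOD 2 * d] :=
    (P.sum_Icc_count_mul ▸ sum_mul_modEq_sum_filter_odd _ _ fun j _ => hmod j).of_dvd
      (mul_dvd_mul_left 2 hdL)
  have hω1 : ω ^ ((P.parts.count 1 : ℕ) : ℤ) = 1 :=
    (hω.zpow_eq_one_iff_dvd _).2 (Int.natCast_dvd_natCast.2 (hdL.trans (hmod 1)))
  refine ⟨hn, ?_⟩
  rw [zpow_sub₀ (hω.ne_zero hd.ne'), hω1, zpow_natCast, hω.pow_div_two_eq_neg_one_pow hS,
    neg_one_pow_div_eq_of_modEq (hdL.trans hn) (hdL.trans hS) hnS, one_div, ← inv_pow,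
    inv_neg_one]

/-- For a partition `λ` with all multiplicities even and divisible by `d⁺ = lcm(2,d)`:
`d⁺` divides `|λ|` and `ω_d^{μ_1(λ) − τ_1(λ)} = (−1)^{|λ|/d}`, where
`τ_1(λ) = (1/2) Σ_{j odd} μ_j(λ)`. -/
theorem stmt_17 (n d : ℕ) (hd : 0 < d) (P : Nat.Partition n)
    (heven : ∀ j, Even (Multiset.count j P.parts))
    (hmod : ∀ j, Nat.lcm 2 d ∣ Multiset.count j P.parts)
    (ω : ℂ) (hω : IsPrimitiveRoot ω d) :
    Nat.lcm 2 d ∣ n ∧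
      ω ^ (((Multiset.count 1 P.parts : ℕ) : ℤ) -
            (((∑ j ∈ (Finset.Icc 1 n).filter (fun j => Odd j),
                Multiset.count j P.parts) / 2 : ℕ) : ℤ)) =
        (-1 : ℂ) ^ (n / d) :=
  stmt_17_general n d hd P hmod ω hω
end

section
/- Let λ be a partition of 2n, and assume μ_1(λ) and μ_{j_0}(λ) are odd for a unique odd j_0 ≥ 3, μ_j(λ) is even for j ≠ 1, j_0, and 2⌊μ_j(λ)/2⌋ ≡ 0 (mod d) for all j. Then c(λ)/2 ≡ j_0/2 + ⌊μ_1(λ)/2⌋ + ⌊μ_{j_0}(λ)/2⌋ (mod d), as elements of Q/dZ. -/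
open Finset

lemma stmt18_aux (N d j₀ : ℕ) (g m : ℕ → ℤ)
    (hj₀3 : 3 ≤ j₀) (hj₀N : j₀ ≤ N)
    (hrec : ∀ j, g j = (if j = 1 then m 1 + 1 else if j = j₀ then m j₀ + 1 else m j) + g (j+1))
    (htop : ∀ j, N < j → g j = 0)
    (hdm : ∀ j, (d:ℤ) ∣ m j) (h2m : ∀ j, (2:ℤ) ∣ m j) :
    (2*(d:ℤ)) ∣ (∑ j ∈ Icc 1 N, g j * g (j+1)) - j₀ - m 1 - m j₀ := by
  set a : ℕ → ℤ := fun j => (if j ≤ 1 then 1 else 0) + (if j ≤ j₀ then 1 else 0) with ha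
  set M : ℕ → ℤ := fun j => g j - a j with hM
  have hMrec : ∀ j, M j = m j + M (j+1) := by
    intro j
    have h := hrec j
    simp only [hM, ha]
    rcases eq_or_ne j 1 with rfl | e1
    · rw [if_pos rfl] at h
      split_ifs <;> omega
    · rcases eq_or_ne j j₀ with rfl | e2
      · rw [if_neg e1, if_pos rfl] at h
        split_ifs <;> omega
      · rw [if_neg e1, if_neg e2] at h
        split_ifs <;> omega
  have hM0 : ∀ j, N < j → M j = 0 := by
    intro j hj
    have h := htop j hj
    simp only [hM, ha, h]
    split_ifs <;> omega
  have hMdvd : ∀ j, (d:ℤ) ∣ M j ∧ (2:ℤ) ∣ M j := by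
    have key : ∀ k j, N < j + k → (d:ℤ) ∣ M j ∧ (2:ℤ) ∣ M j := by
      intro k
      induction k with
      | zero => intro j h; rw [hM0 j (by omega)]; simp
      | succ k ih =>
        intro j h
        by_cases hc : N < j + k
        · exact ih j hc
        · have h2 := ih (j+1) (by omega)
          rw [hMrec j]
          exact ⟨dvd_add (hdm j) h2.1, dvd_add (h2m j) h2.2⟩
    intro j
    exact key (N+1) j (by omega)
  -- expansion
  have expand : ∑ j ∈ Icc 1 N, g j * g (j+1) =
      (∑ j ∈ Icc 1 N, a j * a (j+1)) +
      (∑ j ∈ Icc 1 N, (a j * M (j+1) + a (j+1) * M j)) +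
      (∑ j ∈ Icc 1 N, M j * M (j+1)) := by
    rw [← Finset.sum_add_distrib, ← Finset.sum_add_distrib]
    refine Finset.sum_congr rfl fun j _ => ?_
    have h1 : g j = a j + M j := by simp [hM]
    have h2 : g (j+1) = a (j+1) + M (j+1) := by simp [hM]
    rw [h1, h2]; ring
  -- P1
  have P1 : (∑ j ∈ Icc 1 N, a j * a (j+1)) = (j₀ : ℤ) := by
    have step : ∀ j ∈ Icc 1 N, a j * a (j+1) =
        (if j = 1 then (1:ℤ) else 0) + (if j + 1 ≤ j₀ then 1 else 0) := by
      intro j hj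
      simp only [mem_Icc] at hj
      simp only [ha]
      split_ifs <;> first | ring1 | (exfalso; omega)
    rw [Finset.sum_congr rfl step, Finset.sum_add_distrib, Finset.sum_ite_eq' _ 1 (fun _ => (1:ℤ))]
    have h1 : (1:ℕ) ∈ Icc 1 N := by simp; omega
    rw [if_pos h1]
    have : (∑ j ∈ Icc 1 N, if j + 1 ≤ j₀ then (1:ℤ) else 0) = ((j₀ - 1 : ℕ) : ℤ) := by
      rw [← Finset.Ico_add_one_right_eq_Icc, ← Finset.sum_Ico_consecutive _ (by omega : 1 ≤ j₀) (by omega : j₀ ≤ N + 1)]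
      have e1 : (∑ j ∈ Ico 1 j₀, if j + 1 ≤ j₀ then (1:ℤ) else 0) = ∑ j ∈ Ico 1 j₀, (1:ℤ) := by
        refine Finset.sum_congr rfl fun j hj => ?_
        simp only [mem_Ico] at hj
        rw [if_pos (by omega)]
      have e2 : (∑ j ∈ Ico j₀ (N+1), if j + 1 ≤ j₀ then (1:ℤ) else 0) = 0 := by
        refine Finset.sum_eq_zero fun j hj => ?_
        simp only [mem_Ico] at hj
        rw [if_neg (by omega)]
      rw [e1, e2, Finset.sum_const, Nat.card_Ico]
      simp
    rw [this]
    push_cast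
    omega
  -- P2
  have P2 : (∑ j ∈ Icc 1 N, (a j * M (j+1) + a (j+1) * M j)) =
      M 1 + M 2 + M j₀ + M (j₀+1) + 2 * ∑ j ∈ Ico 2 j₀, M j := by
    have step : ∀ j ∈ Icc 1 N, a j * M (j+1) + a (j+1) * M j =
        ((if j = 1 then M (j+1) else 0) + (if j ≤ j₀ then M (j+1) else 0)) +
        (if j + 1 ≤ j₀ then M j else 0) := by
      intro j hj
      simp only [mem_Icc] at hj
      simp only [ha]
      split_ifs <;> first | ring1 | (exfalso; omega)
    rw [Finset.sum_congr rfl step, Finset.sum_add_distrib, Finset.sum_add_distrib,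
      Finset.sum_ite_eq' _ 1 (fun j => M (j+1))]
    have h1 : (1:ℕ) ∈ Icc 1 N := by simp; omega
    rw [if_pos h1]
    norm_num
    have T2 : (∑ j ∈ Icc 1 N, if j ≤ j₀ then M (j+1) else 0) =
        (∑ j ∈ Ico 2 j₀, M j) + M j₀ + M (j₀+1) := by
      rw [← Finset.Ico_add_one_right_eq_Icc, ← Finset.sum_Ico_consecutive _ (by omega : 1 ≤ j₀+1) (by omega : j₀+1 ≤ N + 1)]
      have e2 : (∑ j ∈ Ico (j₀+1) (N+1), if j ≤ j₀ then M (j+1) else 0) = 0 := by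
        refine Finset.sum_eq_zero fun j hj => ?_
        simp only [mem_Ico] at hj
        rw [if_neg (by omega)]
      have e1 : (∑ j ∈ Ico 1 (j₀+1), if j ≤ j₀ then M (j+1) else 0) = ∑ j ∈ Ico 1 (j₀+1), M (j+1) := by
        refine Finset.sum_congr rfl fun j hj => ?_
        simp only [mem_Ico] at hj
        rw [if_pos (by omega)]
      rw [e1, e2, add_zero]
      have reindex : (∑ j ∈ Ico 1 (j₀+1), M (j+1)) = ∑ j ∈ Ico 2 (j₀+2), M j := by
        rw [Finset.sum_Ico_eq_sum_range, Finset.sum_Ico_eq_sum_range]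
        have hc : j₀ + 1 - 1 = j₀ + 2 - 2 := by omega
        rw [hc]
        refine Finset.sum_congr rfl fun i _ => ?_
        congr 1
        omega
      rw [reindex, ← Finset.sum_Ico_consecutive _ (by omega : 2 ≤ j₀) (by omega : j₀ ≤ j₀ + 2)]
      have : (∑ j ∈ Ico j₀ (j₀+2), M j) = M j₀ + M (j₀+1) := by
        have : j₀ + 2 = (j₀ + 1) + 1 := by omega
        rw [this, Finset.sum_Ico_succ_top (by omega), Finset.sum_Ico_succ_top (by omega)]
        simp
      rw [this]; ring
    have T4 : (∑ j ∈ Icc 1 N, if j + 1 ≤ j₀ then M j else 0) = M 1 + ∑ j ∈ Ico 2 j₀, M j := by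
      rw [← Finset.Ico_add_one_right_eq_Icc, ← Finset.sum_Ico_consecutive _ (by omega : 1 ≤ j₀) (by omega : j₀ ≤ N + 1)]
      have e2 : (∑ j ∈ Ico j₀ (N+1), if j + 1 ≤ j₀ then M j else 0) = 0 := by
        refine Finset.sum_eq_zero fun j hj => ?_
        simp only [mem_Ico] at hj
        rw [if_neg (by omega)]
      have e1 : (∑ j ∈ Ico 1 j₀, if j + 1 ≤ j₀ then M j else 0) = ∑ j ∈ Ico 1 j₀, M j := by
        refine Finset.sum_congr rfl fun j hj => ?_
        simp only [mem_Ico] at hj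
        rw [if_pos (by omega)]
      rw [e1, e2, add_zero, Finset.sum_eq_sum_Ico_succ_bot (by omega : 1 < j₀)]
    simp only [Nat.add_one_le_iff] at T4
    rw [T2, T4]
    ring
  -- P3
  have P3 : (2*(d:ℤ)) ∣ ∑ j ∈ Icc 1 N, M j * M (j+1) := by
    refine Finset.dvd_sum fun j _ => ?_
    exact mul_dvd_mul (hMdvd j).2 (hMdvd (j+1)).1
  have hm1 : m 1 = M 1 - M 2 := by have := hMrec 1; norm_num at this; omega
  have hmj : m j₀ = M j₀ - M (j₀+1) := by have := hMrec j₀; omega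
  have key : (∑ j ∈ Icc 1 N, g j * g (j+1)) - j₀ - m 1 - m j₀ =
      2 * (M 2 + M (j₀+1) + ∑ j ∈ Ico 2 j₀, M j) + ∑ j ∈ Icc 1 N, M j * M (j+1) := by
    rw [expand, P1, P2, hm1, hmj]; ring
  rw [key]
  refine dvd_add ?_ P3
  have : (d:ℤ) ∣ (M 2 + M (j₀+1) + ∑ j ∈ Ico 2 j₀, M j) :=
    dvd_add (dvd_add (hMdvd 2).1 (hMdvd (j₀+1)).1) (Finset.dvd_sum fun j _ => (hMdvd j).1)
  exact mul_dvd_mul_left 2 this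


/-- Type D congruence: for a partition `λ` of `2n` in which exactly the multiplicities
`μ_1(λ)` and `μ_{j_0}(λ)` (for a unique odd `j_0 ≥ 3`) are odd, and with
`d ∣ 2⌊μ_j(λ)/2⌋` for all `j`, one has
`c(λ)/2 ≡ j_0/2 + ⌊μ_1(λ)/2⌋ + ⌊μ_{j_0}(λ)/2⌋` in `ℚ/dℤ`. -/
theorem stmt_18 (n d j₀ : ℕ) (hd : 0 < d) (P : Nat.Partition (2 * n))
    (hj₀odd : Odd j₀) (hj₀3 : 3 ≤ j₀)
    (h1 : Odd (Multiset.count 1 P.parts))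
    (hj : Odd (Multiset.count j₀ P.parts))
    (hev : ∀ j, j ≠ 1 → j ≠ j₀ → Even (Multiset.count j P.parts))
    (hmod : ∀ j, d ∣ 2 * (Multiset.count j P.parts / 2)) :
    (fun conj : ℕ → ℕ =>
      ∃ k : ℤ,
        ((∑ j ∈ Finset.Icc 1 (2 * n), conj j * conj (j + 1) : ℕ) : ℚ) / 2 -
            ((j₀ : ℚ) / 2 + ((Multiset.count 1 P.parts / 2 : ℕ) : ℚ) +
              ((Multiset.count j₀ P.parts / 2 : ℕ) : ℚ)) =
          (k : ℚ) * (d : ℚ))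
      (fun j => Multiset.card (P.parts.filter (fun p => j ≤ p))) := by
  simp only
  set c : ℕ → ℕ := fun j => Multiset.count j P.parts with hc
  set g : ℕ → ℤ := fun j => (Multiset.card (P.parts.filter (fun p => j ≤ p)) : ℤ) with hg
  set m : ℕ → ℤ := fun j => ((2 * (c j / 2) : ℕ) : ℤ) with hm
  -- basic facts
  have hle : ∀ p ∈ P.parts, p ≤ 2 * n := by
    intro p hp
    have h := Multiset.single_le_sum (fun y _ => Nat.zero_le y) p hp
    rwa [P.parts_sum] at h
  have hj₀N : j₀ ≤ 2 * n := by
    have hne : Multiset.count j₀ P.parts ≠ 0 := by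
      intro h
      rw [h] at hj
      simp [Nat.odd_iff] at hj
    have hmem : j₀ ∈ P.parts := Multiset.count_pos.mp (Nat.pos_of_ne_zero hne)
    exact hle j₀ hmem
  -- filter recurrence
  have hfil : ∀ (s : Multiset ℕ) (j : ℕ), Multiset.card (s.filter (fun p => j ≤ p)) =
      Multiset.count j s + Multiset.card (s.filter (fun p => j+1 ≤ p)) := by
    intro s j
    induction s using Multiset.induction_on with
    | empty => simp
    | cons a s ih =>
      rw [Multiset.filter_cons, Multiset.filter_cons, Multiset.count_cons]
      rcases eq_or_ne a j with rfl | h3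
      · simp [ih]; omega
      · by_cases hle1 : j ≤ a <;> by_cases hle2 : j + 1 ≤ a <;>
          simp [hle1, hle2, Ne.symm h3, ih] <;> omega
  have hcnt : ∀ j, (c j : ℤ) = if j = 1 then m 1 + 1 else if j = j₀ then m j₀ + 1 else m j := by
    intro j
    simp only [hm, hc]
    split_ifs with e1 e2
    · subst e1
      have h := Nat.odd_iff.mp h1
      push_cast
      omega
    · subst e2
      have h := Nat.odd_iff.mp hj
      push_cast
      omega
    · have h := Nat.even_iff.mp (hev j e1 e2)
      push_cast
      omega
  have hrec : ∀ j, g j = (if j = 1 then m 1 + 1 else if j = j₀ then m j₀ + 1 else m j) + g (j+1) := by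
    intro j
    rw [← hcnt j]
    simp only [hg, hc]
    rw [hfil P.parts j]
    push_cast
    ring
  have htop : ∀ j, 2 * n < j → g j = 0 := by
    intro j hjn
    simp only [hg]
    rw [Multiset.filter_eq_nil.mpr]
    · simp
    · intro p hp
      have := hle p hp
      omega
  have hdm : ∀ j, (d:ℤ) ∣ m j := by
    intro j
    simp only [hm]
    exact_mod_cast Int.natCast_dvd_natCast.mpr (hmod j)
  have h2m : ∀ j, (2:ℤ) ∣ m j := by
    intro j
    simp only [hm]
    exact ⟨((c j / 2 : ℕ) : ℤ), by push_cast; ring⟩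
  have hdvd := stmt18_aux (2*n) d j₀ g m hj₀3 hj₀N hrec htop hdm h2m
  obtain ⟨k, hk⟩ := hdvd
  refine ⟨k, ?_⟩
  have hm1' : m 1 = 2 * ((Multiset.count 1 P.parts / 2 : ℕ) : ℤ) := by
    simp only [hm, hc]; push_cast; ring
  have hmj' : m j₀ = 2 * ((Multiset.count j₀ P.parts / 2 : ℕ) : ℤ) := by
    simp only [hm, hc]; push_cast; ring
  rw [hm1', hmj'] at hk
  simp only [hg] at hk
  have h3 := congrArg (fun z : ℤ => (z : ℚ)) hk
  rw [show ((Multiset.count 1 P.parts / 2 : ℕ) : ℚ) = (((Multiset.count 1 P.parts / 2 : ℕ) : ℤ) : ℚ) by push_cast; rfl,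
     show ((Multiset.count j₀ P.parts / 2 : ℕ) : ℚ) = (((Multiset.count j₀ P.parts / 2 : ℕ) : ℤ) : ℚ) by push_cast; rfl]
  push_cast [Int.cast_sub, Int.cast_mul] at h3 ⊢
  linarith
end
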